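/- Let (R, ⊳) be a connected rack, fix x ∈ R, let G = Inn(R) be the inner automorphism group of R, and let H ≤ G be the stabilizer of x. Then the operation αH ⊳ βH := (α ℓ_x α⁻¹ β)H on the coset space G/H is well-defined and makes G/H a rack, and the evaluation map G/H → R, αH ↦ α(x), is a rack isomorphism. -/

import Mathlib

open Quandles

/-- A subrack of a rack `R`: a subset `S` with `ℓ_s(S) = S` for all `s ∈ S`. -/
def IsSubrack {R : Type*} [Rack R] (S : Set R) : Prop :=
  ∀ s ∈ S, (fun b => s ◃ b) '' S = S

/-- The inner automorphism group of a rack: the subgroup of permutations generated by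
the left multiplications. -/
def Inn (R : Type*) [Rack R] : Subgroup (Equiv.Perm R) :=
  Subgroup.closure (Set.range (Rack.act' : R → R ≃ R))

/-- A rack is connected if its inner automorphism group acts transitively on it,
i.e. there is exactly one orbit. -/
def IsConnectedRack (R : Type*) [Rack R] : Prop :=
  Nonempty R ∧ ∀ x y : R, ∃ g ∈ Inn R, g x = y

/-- A decomposition of a rack into two disjoint nonempty subracks. -/
structure IsDecomposition (R : Type*) [Rack R] (S T : Set R) : Prop where
  subrack_left : IsSubrack S
  subrack_right : IsSubrack T
  nonempty_left : S.Nonempty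
  nonempty_right : T.Nonempty
  disjoint : Disjoint S T
  union : S ∪ T = Set.univ

/-- Two shelves (racks, quandles) are isomorphic if there is a structure-preserving
bijection between them. -/
def RackIsomorphic (A B : Type*) [Shelf A] [Shelf B] : Prop :=
  ∃ e : A ≃ B, ∀ x y : A, e (x ◃ y) = e x ◃ e y

/-- The permutation rack on a set `R` given by a permutation `π`: `a ◃ b = π b`. -/
def permRack {R : Type*} (π : Equiv.Perm R) : Rack R where
  act _ b := π b
  self_distrib := rfl
  invAct _ b := π.symm b
  left_inv _ b := π.symm_apply_apply b
  right_inv _ b := π.apply_symm_apply b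

/-- The product of two racks, with componentwise operation. -/
instance prodRack {A B : Type*} [Rack A] [Rack B] : Rack (A × B) where
  act x y := (x.1 ◃ y.1, x.2 ◃ y.2)
  self_distrib := by
    intro x y z
    dsimp only
    rw [Shelf.self_distrib (x := x.1), Shelf.self_distrib (x := x.2)]
  invAct x y := (x.1 ◃⁻¹ y.1, x.2 ◃⁻¹ y.2)
  left_inv x y := by
    dsimp only
    rw [Rack.left_inv x.1 y.1, Rack.left_inv x.2 y.2]
  right_inv x y := by
    dsimp only
    rw [Rack.right_inv x.1 y.1, Rack.right_inv x.2 y.2]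

/-- A subrack, with its induced rack structure. -/
def Subrack.rack {R : Type*} [Rack R] (S : Set R) (hS : IsSubrack S) : Rack S where
  act x y := ⟨x.1 ◃ y.1, by
    have h := hS x.1 x.2
    exact (Set.ext_iff.mp h (x.1 ◃ y.1)).mp ⟨y.1, y.2, rfl⟩⟩
  self_distrib := by
    intro x y z
    exact Subtype.ext Shelf.self_distrib
  invAct x y := ⟨x.1 ◃⁻¹ y.1, by
    have h := hS x.1 x.2
    have hy : (y : R) ∈ (fun b => x.1 ◃ b) '' S := (Set.ext_iff.mp h y.1).mpr y.2
    obtain ⟨u, hu, hequ⟩ := hy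
    have : x.1 ◃⁻¹ (y : R) = u := by
      rw [← hequ]; exact Rack.left_inv x.1 u
    rw [this]; exact hu⟩
  left_inv x y := Subtype.ext (Rack.left_inv x.1 y.1)
  right_inv x y := Subtype.ext (Rack.right_inv x.1 y.1)

/- Inn(R) acts on R by rack automorphisms, and transitively when R is connected, so evaluation
at x identifies G/H with R (orbit–stabilizer). Pulling the rack operation of R back along this
bijection gives a rack structure on G/H, and on cosets it is the stated formula because
α ℓ_x α⁻¹ β sends x to α(x ◃ α⁻¹(β x)) = α x ◃ β x. -/

abbrev Equiv.rack {A B : Type*} [Rack B] (e : A ≃ B) : Rack A where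
  act a b := e.symm (e a ◃ e b)
  self_distrib := by simp only [Equiv.apply_symm_apply]; exact congrArg e.symm Shelf.self_distrib
  invAct a b := e.symm (e a ◃⁻¹ e b)
  left_inv a b := by simp only [Equiv.apply_symm_apply, Rack.invAct_act_eq, Equiv.symm_apply_apply]
  right_inv a b := by simp only [Equiv.apply_symm_apply, Rack.act_invAct_eq, Equiv.symm_apply_apply]

lemma Equiv.rack_act_apply {A B : Type*} [Rack B] (e : A ≃ B) (a b : A) :
    e (e.rack.act a b) = e a ◃ e b :=
  e.apply_symm_apply _

lemma map_act_of_mem_inn {R : Type*} [Rack R] {g : Equiv.Perm R} (hg : g ∈ Inn R) (a b : R) :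
    g (a ◃ b) = g a ◃ g b := by
  induction hg using Subgroup.closure_induction generalizing a b with
  | mem g hg =>
    obtain ⟨y, rfl⟩ := hg
    exact Shelf.self_distrib
  | one => rfl
  | mul g h _ _ hg hh => simp only [Equiv.Perm.mul_apply, hh, hg]
  | inv g _ hg =>
    apply g.injective
    simp only [hg, Equiv.Perm.coe_inv, Equiv.apply_symm_apply]

lemma IsConnectedRack.isPretransitive {R : Type*} [Rack R] (hR : IsConnectedRack R) :
    MulAction.IsPretransitive (Inn R) R :=
  ⟨fun x y => by
    obtain ⟨g, hg, hgx⟩ := hR.2 x y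
    exact ⟨⟨g, hg⟩, hgx⟩⟩

noncomputable def MulAction.quotientStabilizerEquivOfIsPretransitive (G : Type*) {X : Type*}
    [Group G] [MulAction G X] [MulAction.IsPretransitive G X] (x : X) :
    G ⧸ MulAction.stabilizer G x ≃ X :=
  Equiv.ofBijective (MulAction.ofQuotientStabilizer G x)
    ⟨MulAction.injective_ofQuotientStabilizer G x,
      Function.Surjective.of_comp (g := QuotientGroup.mk) (MulAction.surjective_smul G x)⟩

lemma inn_conj_mul_apply {R : Type*} [Rack R] (x : R) (ℓx : Inn R)
    (hℓx : (ℓx : Equiv.Perm R) = Rack.act' x) (α β : Inn R) :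
    ((α * ℓx * α⁻¹ * β : Inn R) : Equiv.Perm R) x =
      (α : Equiv.Perm R) x ◃ (β : Equiv.Perm R) x := by
  simp only [Subgroup.coe_mul, Subgroup.coe_inv, Equiv.Perm.mul_apply, hℓx, Rack.act'_apply,
    map_act_of_mem_inn α.2, Equiv.Perm.coe_inv, Equiv.apply_symm_apply]

/-- For a connected rack `R`, `x ∈ R`, `G = Inn(R)` and `H` the stabilizer of
`x`, the operation `αH ⊳ βH = (α ℓₓ α⁻¹ β)H` is well-defined on `G/H`, makes it a rack, and
evaluation at `x` is a rack isomorphism `G/H ≅ R`. -/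
theorem connected_rack_coset_model {R : Type*} [Rack R] (hR : IsConnectedRack R) (x : R)
    (ℓx : ↥(Inn R)) (hℓx : (ℓx : Equiv.Perm R) = Rack.act' x) :
    ∃ op : (↥(Inn R) ⧸ MulAction.stabilizer (↥(Inn R)) x) →
        (↥(Inn R) ⧸ MulAction.stabilizer (↥(Inn R)) x) →
        (↥(Inn R) ⧸ MulAction.stabilizer (↥(Inn R)) x),
      (∀ α β : ↥(Inn R), op ↑α ↑β = ↑(α * ℓx * α⁻¹ * β)) ∧
      (∀ a, Function.Bijective (op a)) ∧
      (∀ a b c, op a (op b c) = op (op a b) (op a c)) ∧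
      ∃ e : (↥(Inn R) ⧸ MulAction.stabilizer (↥(Inn R)) x) ≃ R,
        (∀ α : ↥(Inn R), e ↑α = (α : Equiv.Perm R) x) ∧
        (∀ a b, e (op a b) = e a ◃ e b) := by
  have := hR.isPretransitive
  let e := MulAction.quotientStabilizerEquivOfIsPretransitive (Inn R) x
  let := e.rack
  refine ⟨(· ◃ ·), fun α β => e.injective ?_, fun a => (Rack.act' a).bijective,
    fun _ _ _ => Shelf.self_distrib, e, fun _ => rfl, e.rack_act_apply⟩
  exact (e.rack_act_apply _ _).trans (inn_conj_mul_apply x ℓx hℓx α β).symm
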